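/- Let ψ_T, p_T, ψ, p ∈ (0,1), let K, N be positive integers, and set θ_T = 1 − (1−p_T)^K and θ = 1 − (1−p)^K. Let Y₁, …, Y_N be independent, identically distributed zero-inflated binomial (ZIB) random variables with parameters (ψ_T, K, p_T), let s_d be the number of indices i with Y_i ≥ 1 and d = ∑_{i=1}^N Y_i, and define the score component S₂ = (d − s_d·K·p)/(p(1−p)) − (N − s_d)·ψ·K·(1−θ)/((1 − ψθ)(1−p)). Then E(S₂) = N·ψ_T·K·(p_T − p·θ_T)/(p(1−p)) − N·(1 − ψ_T·θ_T)·ψ·K·(1−θ)/((1 − ψθ)(1−p)). -/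

import Mathlib

/-- The probability mass function of the zero-inflated binomial distribution with
parameters `ψ`, `K`, `p`, for values `y = 0, 1, …, K`. -/
def zibPmf (ψ p : ℝ) (K : ℕ) (y : ℕ) : ℝ :=
  if y = 0 then 1 - ψ + ψ * (1 - p) ^ K
  else ψ * (K.choose y : ℝ) * p ^ y * (1 - p) ^ (K - y)

/-- Joint pmf of `N` i.i.d. zero-inflated binomial observations, each taking values in
`{0, 1, …, K}` (encoded as `Fin (K+1)`). -/
def zibJoint (ψ p : ℝ) (K N : ℕ) (ω : Fin N → Fin (K + 1)) : ℝ :=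
  ∏ i, zibPmf ψ p K (ω i)

/-- Expectation of a statistic `f` of `N` i.i.d. ZIB`(ψ, K, p)` observations. -/
def zibExp (ψ p : ℝ) (K N : ℕ) (f : (Fin N → Fin (K + 1)) → ℝ) : ℝ :=
  ∑ ω : Fin N → Fin (K + 1), zibJoint ψ p K N ω * f ω

/-- The total number of detections `d = ∑ᵢ Yᵢ`. -/
def dTot {K N : ℕ} (ω : Fin N → Fin (K + 1)) : ℝ :=
  ∑ i, ((ω i : ℕ) : ℝ)

/-- The number of sites with at least one detection, `s_d = #{i : Yᵢ ≥ 1}`. -/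
def sDet {K N : ℕ} (ω : Fin N → Fin (K + 1)) : ℝ :=
  ((Finset.univ.filter fun i => (ω i : ℕ) ≠ 0).card : ℝ)

/-! By independence, the expectation of a sum of per-site statistics is `N` times the single-site
expectation. The score `S₂` is affine in `d` and `s_d`, both such sums, so `E(S₂)` only needs the
single-site moments `E Y = ψ K p` (the binomial mean, scaled by the occupancy probability `ψ`) and
`P(Y ≥ 1) = ψ θ`. -/

open Finset

theorem sum_range_choose_mul_pow_mul_pow_mul_cast {R : Type*} [CommSemiring R] (x y : R)
    (n : ℕ) :
    ∑ k ∈ range (n + 1), (n.choose k : R) * x ^ k * y ^ (n - k) * k = n * x * (x + y) ^ (n - 1) := by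
  cases n with
  | zero => simp
  | succ m =>
    rw [sum_range_succ', add_pow, mul_sum]
    simp only [Nat.cast_zero, mul_zero, add_zero, add_tsub_cancel_right]
    refine sum_congr rfl fun k _ => ?_
    have hchoose : ((m + 1).choose (k + 1) : R) * (k + 1 : ℕ) = (m + 1 : ℕ) * m.choose k := by
      rw [← Nat.cast_mul, ← Nat.cast_mul, Nat.add_one_mul_choose_eq]
    rw [Nat.add_sub_add_right, pow_succ]
    calc ((m + 1).choose (k + 1) : R) * (x ^ k * x) * y ^ (m - k) * (k + 1 : ℕ)
        = ((m + 1).choose (k + 1) : R) * (k + 1 : ℕ) * x * (x ^ k * y ^ (m - k)) := by ring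
      _ = _ := by rw [hchoose]; push_cast; ring

theorem Fintype.sum_prod_mul_sum_apply {ι α R : Type*} [Fintype ι] [DecidableEq ι] [Fintype α]
    [CommSemiring R] (f g : α → R) (hf : ∑ a, f a = 1) :
    ∑ ω : ι → α, (∏ i, f (ω i)) * ∑ i, g (ω i) = Fintype.card ι * ∑ a, f a * g a := by
  have hsite (i : ι) : ∑ ω : ι → α, (∏ j, f (ω j)) * g (ω i) = ∑ a, f a * g a := by
    calc ∑ ω : ι → α, (∏ j, f (ω j)) * g (ω i)
        = ∑ ω : ι → α, ∏ j, f (ω j) * (if j = i then g (ω j) else 1) := by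
          simp only [prod_mul_distrib, prod_ite_eq']
      _ = ∏ j, ∑ a, f a * (if j = i then g a else 1) :=
          (Fintype.prod_sum fun j a => f a * if j = i then g a else 1).symm
      _ = ∑ a, f a * g a := by
          rw [Fintype.prod_eq_single i fun j hj => by simp [hj, hf]]
          simp
  calc ∑ ω : ι → α, (∏ i, f (ω i)) * ∑ i, g (ω i)
      = ∑ i, ∑ ω : ι → α, (∏ j, f (ω j)) * g (ω i) := by simp only [mul_sum]; exact sum_comm
    _ = Fintype.card ι * ∑ a, f a * g a := by simp [hsite]

section ZIB

variable (ψ p : ℝ) (K : ℕ)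

theorem zibPmf_eq_mul_add_ite (y : ℕ) :
    zibPmf ψ p K y = ψ * (K.choose y * p ^ y * (1 - p) ^ (K - y)) + if y = 0 then 1 - ψ else 0 := by
  by_cases hy : y = 0 <;> simp [zibPmf, hy] <;> ring

theorem sum_zibPmf : ∑ y : Fin (K + 1), zibPmf ψ p K y = 1 := by
  rw [Fin.sum_univ_eq_sum_range (zibPmf ψ p K)]
  simp only [zibPmf_eq_mul_add_ite, sum_add_distrib, ← mul_sum, sum_ite_eq', mem_range]
  have hbinom : ∑ y ∈ range (K + 1), (K.choose y : ℝ) * p ^ y * (1 - p) ^ (K - y) = 1 := by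
    calc ∑ y ∈ range (K + 1), (K.choose y : ℝ) * p ^ y * (1 - p) ^ (K - y)
        = (p + (1 - p)) ^ K := by rw [add_pow]; exact sum_congr rfl fun _ _ => by ring
      _ = 1 := by rw [add_sub_cancel, one_pow]
  simp [hbinom]

theorem sum_zibPmf_mul_cast : ∑ y : Fin (K + 1), zibPmf ψ p K y * (y : ℕ) = ψ * K * p := by
  rw [Fin.sum_univ_eq_sum_range (fun y => zibPmf ψ p K y * y)]
  simp only [zibPmf_eq_mul_add_ite, add_mul, sum_add_distrib, mul_assoc ψ, ← mul_sum,
    sum_range_choose_mul_pow_mul_pow_mul_cast, ite_mul, zero_mul]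
  simp

theorem sum_zibPmf_mul_ite_ne_zero :
    ∑ y : Fin (K + 1), zibPmf ψ p K y * (if (y : ℕ) ≠ 0 then 1 else 0) = ψ * (1 - (1 - p) ^ K) := by
  have htotal := sum_zibPmf ψ p K
  rw [Fin.sum_univ_succ] at htotal ⊢
  simp only [Fin.val_zero, Fin.val_succ, ne_eq, not_true_eq_false, Nat.add_one_ne_zero,
    not_false_eq_true, if_false, if_true, mul_zero, mul_one, zero_add] at htotal ⊢
  rw [zibPmf, if_pos rfl] at htotal
  linarith

theorem zibExp_sum_apply (N : ℕ) (g : Fin (K + 1) → ℝ) :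
    zibExp ψ p K N (fun ω => ∑ i, g (ω i)) = N * ∑ y : Fin (K + 1), zibPmf ψ p K y * g y := by
  simpa [zibExp, zibJoint] using
    Fintype.sum_prod_mul_sum_apply (ι := Fin N) (fun y : Fin (K + 1) => zibPmf ψ p K y) g
      (sum_zibPmf ψ p K)

theorem sum_zibPmf_mul_affine (a b c : ℝ) :
    ∑ y : Fin (K + 1), zibPmf ψ p K y * (a * (y : ℕ) + b * (if (y : ℕ) ≠ 0 then 1 else 0) + c) =
      a * (ψ * K * p) + b * (ψ * (1 - (1 - p) ^ K)) + c := by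
  simp only [mul_add, sum_add_distrib, mul_left_comm _ a, mul_left_comm _ b, ← mul_sum,
    ← sum_mul, sum_zibPmf_mul_cast, sum_zibPmf_mul_ite_ne_zero, sum_zibPmf, one_mul]

theorem zibExp_affine (N : ℕ) (a b c : ℝ) :
    zibExp ψ p K N (fun ω => a * dTot ω + b * sDet ω + N * c) =
      N * (a * (ψ * K * p) + b * (ψ * (1 - (1 - p) ^ K)) + c) := by
  have hsites : (fun ω : Fin N → Fin (K + 1) => a * dTot ω + b * sDet ω + N * c) =
      fun ω => ∑ i, (a * (ω i : ℕ) + b * (if (ω i : ℕ) ≠ 0 then 1 else 0) + c) := by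
    funext ω
    simp [dTot, sDet, natCast_card_filter, sum_add_distrib, mul_sum]
  rw [hsites,
    zibExp_sum_apply ψ p K N fun y => a * (y : ℕ) + b * (if (y : ℕ) ≠ 0 then 1 else 0) + c,
    sum_zibPmf_mul_affine]

end ZIB

theorem zib_score_S2_mean_general (ψT pT ψ p : ℝ) (K N : ℕ) :
    zibExp ψT pT K N (fun ω =>
        (dTot ω - sDet ω * (K : ℝ) * p) / (p * (1 - p)) -
          ((N : ℝ) - sDet ω) * ψ * (K : ℝ) * (1 - (1 - (1 - p) ^ K)) /
            ((1 - ψ * (1 - (1 - p) ^ K)) * (1 - p))) =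
      (N : ℝ) * ψT * (K : ℝ) * (pT - p * (1 - (1 - pT) ^ K)) / (p * (1 - p)) -
        (N : ℝ) * (1 - ψT * (1 - (1 - pT) ^ K)) * ψ * (K : ℝ) * (1 - (1 - (1 - p) ^ K)) /
          ((1 - ψ * (1 - (1 - p) ^ K)) * (1 - p)) := by
  set c := ψ * K * (1 - (1 - (1 - p) ^ K)) / ((1 - ψ * (1 - (1 - p) ^ K)) * (1 - p)) with hc
  have hscore : (fun ω : Fin N → Fin (K + 1) =>
      (dTot ω - sDet ω * (K : ℝ) * p) / (p * (1 - p)) -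
        ((N : ℝ) - sDet ω) * ψ * (K : ℝ) * (1 - (1 - (1 - p) ^ K)) /
          ((1 - ψ * (1 - (1 - p) ^ K)) * (1 - p))) =
      fun ω => 1 / (p * (1 - p)) * dTot ω + (c - K * p / (p * (1 - p))) * sDet ω + N * -c := by
    funext ω
    rw [hc]
    ring
  rw [hscore, zibExp_affine, hc]
  ring

/-- With data `Y₁, …, Y_N` i.i.d. ZIB`(ψ_T, K, p_T)`,
`θ_T = 1 − (1−p_T)^K`, `θ = 1 − (1−p)^K`, and score component
`S₂ = (d − s_d K p)/(p(1−p)) − (N − s_d) ψ K (1−θ)/((1 − ψθ)(1−p))`, one has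
`E(S₂) = N ψ_T K (p_T − p θ_T)/(p(1−p)) − N (1 − ψ_T θ_T) ψ K (1−θ)/((1 − ψθ)(1−p))`. -/
theorem zib_score_S2_mean (ψT pT ψ p : ℝ)
    (hψT0 : 0 < ψT) (hψT1 : ψT < 1) (hpT0 : 0 < pT) (hpT1 : pT < 1)
    (hψ0 : 0 < ψ) (hψ1 : ψ < 1) (hp0 : 0 < p) (hp1 : p < 1)
    (K N : ℕ) (hK : 0 < K) (hN : 0 < N) :
    zibExp ψT pT K N (fun ω =>
        (dTot ω - sDet ω * (K : ℝ) * p) / (p * (1 - p)) -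
          ((N : ℝ) - sDet ω) * ψ * (K : ℝ) * (1 - (1 - (1 - p) ^ K)) /
            ((1 - ψ * (1 - (1 - p) ^ K)) * (1 - p))) =
      (N : ℝ) * ψT * (K : ℝ) * (pT - p * (1 - (1 - pT) ^ K)) / (p * (1 - p)) -
        (N : ℝ) * (1 - ψT * (1 - (1 - pT) ^ K)) * ψ * (K : ℝ) * (1 - (1 - (1 - p) ^ K)) /
          ((1 - ψ * (1 - (1 - p) ^ K)) * (1 - p)) :=
  zib_score_S2_mean_general ψT pT ψ p K N
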